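/- arXiv:1203.0549 — 2 statements merged into one kernel-verified Lean document; each statement's English description precedes it below -/
import Mathlib

section
/- Let N be a Kähler manifold with ∇R = 0 satisfying ⟨R(Y,X)X, R(X,JX)JX⟩ ≡ 0 for all tangent vectors X, Y. Then along any smooth solution of the Schrödinger-Airy flow from S¹, the functional E₃(u) = ∫|∇_x u_x|² dx − (1/4)∫⟨u_x, R(u_x, Ju_x)Ju_x⟩ dx is conserved. -/
/-!
Differentiating under the integral sign and using `∇ₜuₓ = ∇ₓuₜ` and
`∇ₜ∇ₓ − ∇ₓ∇ₜ = R(uₜ, uₓ)`, the time derivative of the density of `E₃` is `∂ₓ(…) + ⟨uₜ, Φ⟩`,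
where `Φ = 2∇ₓ³uₓ − 2R(uₓ, ∇ₓuₓ)uₓ + ∇ₓ(R(uₓ, Juₓ)Juₓ)` is the `L²`-gradient of `E₃`.
As `∇R = 0` and `∇J = 0`, pairing `Φ` with either part of the flow is again exact:
`⟨J∇ₓuₓ, Φ⟩ = ∂ₓ(2⟨J∇ₓuₓ, ∇ₓ²uₓ⟩)`, and `⟨∇ₓ²uₓ + ½R(uₓ, Juₓ)Juₓ, Φ⟩` is an `x`-derivative
up to `−⟨R(uₓ, ∇ₓuₓ)uₓ, R(uₓ, Juₓ)Juₓ⟩`, which vanishes by the curvature condition.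
So `dE₃/dt` is the integral of the `x`-derivative of a `2π`-periodic function, which is zero.
-/

open scoped RealInnerProductSpace
open Real

/-- An abstract model of the data attached to a smooth map `u : S¹ × ℝ → N` into a
Riemannian manifold: sections of the pullback bundle `u⁻¹TN` (with fibers identified with
a fixed inner product space `V`), covariant derivatives `Dx`, `Dt`, the curvature `R` of
`N` along `u`, together with their standard properties (periodicity in `x`,
torsion-freeness, the commutation formula `∇ₜ∇ₓ − ∇ₓ∇ₜ = R(uₜ,uₓ)`, metric compatibility,
differentiation under the integral sign, and the curvature symmetries). -/
structure CovSystem (V : Type*) [NormedAddCommGroup V] [InnerProductSpace ℝ V] where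
  Sec : Set (ℝ → ℝ → V)
  ux : ℝ → ℝ → V
  ut : ℝ → ℝ → V
  Dx : (ℝ → ℝ → V) → ℝ → ℝ → V
  Dt : (ℝ → ℝ → V) → ℝ → ℝ → V
  R : ℝ → ℝ → V → V → V → V
  mem_ux : ux ∈ Sec
  mem_ut : ut ∈ Sec
  mem_Dx : ∀ s ∈ Sec, Dx s ∈ Sec
  mem_Dt : ∀ s ∈ Sec, Dt s ∈ Sec
  mem_R : ∀ a ∈ Sec, ∀ b ∈ Sec, ∀ c ∈ Sec,
    (fun t x => R t x (a t x) (b t x) (c t x)) ∈ Sec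
  cont : ∀ s ∈ Sec, Continuous fun p : ℝ × ℝ => s p.1 p.2
  periodic : ∀ s ∈ Sec, ∀ t x, s t (x + 2 * π) = s t x
  torsion : Dt ux = Dx ut
  comm : ∀ s ∈ Sec, ∀ t x,
    Dt (Dx s) t x - Dx (Dt s) t x = R t x (ut t x) (ux t x) (s t x)
  metric_x : ∀ s ∈ Sec, ∀ r ∈ Sec, ∀ t x,
    HasDerivAt (fun y => ⟪s t y, r t y⟫) (⟪Dx s t x, r t x⟫ + ⟪s t x, Dx r t x⟫) x
  metric_t : ∀ s ∈ Sec, ∀ r ∈ Sec, ∀ t x,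
    HasDerivAt (fun τ => ⟪s τ x, r τ x⟫) (⟪Dt s t x, r t x⟫ + ⟪s t x, Dt r t x⟫) t
  dint : ∀ s ∈ Sec, ∀ r ∈ Sec, ∀ t,
    HasDerivAt (fun τ => ∫ x in (0 : ℝ)..(2 * π), ⟪s τ x, r τ x⟫)
      (∫ x in (0 : ℝ)..(2 * π), (⟪Dt s t x, r t x⟫ + ⟪s t x, Dt r t x⟫)) t
  R_antisym : ∀ t x a b c, R t x a b c = -R t x b a c
  R_skew : ∀ t x a b c d, ⟪R t x a b c, d⟫ = -⟪R t x a b d, c⟫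
  R_pair : ∀ t x a b c d, ⟪R t x a b c, d⟫ = ⟪R t x c d a, b⟫

/-- A `CovSystem` for a map into a Kähler manifold: in addition there is the complex
structure `J` along `u`, which is an almost-complex structure (`J² = −1`), skew-adjoint
with respect to the metric, and parallel (`∇J = 0`, so it commutes with `Dx` and `Dt`). -/
structure KCovSystem (V : Type*) [NormedAddCommGroup V] [InnerProductSpace ℝ V]
    extends CovSystem V where
  J : ℝ → ℝ → V → V
  mem_J : ∀ s ∈ Sec, (fun t x => J t x (s t x)) ∈ Sec
  J_skew : ∀ t x v w, ⟪J t x v, w⟫ = -⟪v, J t x w⟫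
  J_sq : ∀ t x v, J t x (J t x v) = -v
  J_par_x : ∀ s ∈ Sec, ∀ t x, Dx (fun t x => J t x (s t x)) t x = J t x (Dx s t x)
  J_par_t : ∀ s ∈ Sec, ∀ t x, Dt (fun t x => J t x (s t x)) t x = J t x (Dt s t x)

theorem intervalIntegral_eq_zero_of_hasDerivAt_of_periodic {G g : ℝ → ℝ} {T : ℝ}
    (hG : Function.Periodic G T) (hderiv : ∀ x, HasDerivAt G (g x) x)
    (hg : IntervalIntegrable g MeasureTheory.volume 0 T) :
    ∫ x in (0 : ℝ)..T, g x = 0 := by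
  rw [intervalIntegral.integral_eq_sub_of_hasDerivAt (fun x _ => hderiv x) hg, ← zero_add T,
    hG 0, sub_self]

namespace CovSystem

variable {V : Type*} [NormedAddCommGroup V] [InnerProductSpace ℝ V] (F : CovSystem V)
  {s r : ℝ → ℝ → V}

/-- `∇ₓR = 0`: `Dx` acts on `R(a, b)c` by the Leibniz rule. -/
def IsParallelCurvatureX : Prop :=
  ∀ a ∈ F.Sec, ∀ b ∈ F.Sec, ∀ c ∈ F.Sec, ∀ t x,
    F.Dx (fun t x => F.R t x (a t x) (b t x) (c t x)) t x
      = F.R t x (F.Dx a t x) (b t x) (c t x) + F.R t x (a t x) (F.Dx b t x) (c t x)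
        + F.R t x (a t x) (b t x) (F.Dx c t x)

/-- `∇ₜR = 0`: `Dt` acts on `R(a, b)c` by the Leibniz rule. -/
def IsParallelCurvatureT : Prop :=
  ∀ a ∈ F.Sec, ∀ b ∈ F.Sec, ∀ c ∈ F.Sec, ∀ t x,
    F.Dt (fun t x => F.R t x (a t x) (b t x) (c t x)) t x
      = F.R t x (F.Dt a t x) (b t x) (c t x) + F.R t x (a t x) (F.Dt b t x) (c t x)
        + F.R t x (a t x) (b t x) (F.Dt c t x)

theorem continuous_inner (hs : s ∈ F.Sec) (hr : r ∈ F.Sec) (t : ℝ) :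
    Continuous fun x => ⟪s t x, r t x⟫ :=
  have hslice : ∀ q ∈ F.Sec, Continuous fun x => q t x := fun q hq =>
    (F.cont q hq).comp (continuous_const.prodMk continuous_id)
  (hslice s hs).inner (hslice r hr)

theorem periodic_inner (hs : s ∈ F.Sec) (hr : r ∈ F.Sec) (t : ℝ) :
    Function.Periodic (fun x => ⟪s t x, r t x⟫) (2 * π) := fun x => by
  simp only [F.periodic s hs, F.periodic r hr]

theorem continuous_Dt_inner (hs : s ∈ F.Sec) (hr : r ∈ F.Sec) (t : ℝ) :
    Continuous fun x => ⟪F.Dt s t x, r t x⟫ + ⟪s t x, F.Dt r t x⟫ :=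
  (F.continuous_inner (F.mem_Dt s hs) hr t).add (F.continuous_inner hs (F.mem_Dt r hr) t)

theorem R_self (t x : ℝ) (a c : V) : F.R t x a a c = 0 := by
  have h := F.R_antisym t x a a c
  rwa [eq_neg_iff_add_eq_zero, ← two_smul ℝ, smul_eq_zero, or_iff_right two_ne_zero] at h

theorem inner_R_self (t x : ℝ) (a b c : V) : ⟪F.R t x a b c, c⟫ = 0 := by
  linarith [F.R_skew t x a b c c]

theorem inner_R_jacobi_symm (t x : ℝ) (y a b : V) :
    ⟪F.R t x y a y, b⟫ = ⟪F.R t x y b y, a⟫ :=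
  F.R_pair t x y a y b

theorem hasDerivAt_inner_Dx_R_Dx (hRx : F.IsParallelCurvatureX) (hs : s ∈ F.Sec) (t x : ℝ) :
    HasDerivAt (fun y => ⟪F.Dx s t y, F.R t y (s t y) (F.Dx s t y) (s t y)⟫)
      (2 * ⟪F.Dx (F.Dx s) t x, F.R t x (s t x) (F.Dx s t x) (s t x)⟫) x := by
  have hw := F.mem_Dx s hs
  refine (F.metric_x _ hw _ (F.mem_R _ hs _ hw _ hs) t x).congr_deriv ?_
  rw [hRx _ hs _ hw _ hs, F.R_self, inner_add_right, inner_add_right, inner_zero_right,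
    real_inner_comm (F.R t x _ _ (F.Dx s t x)), F.inner_R_self,
    real_inner_comm (F.R t x _ (F.Dx (F.Dx s) t x) _), F.inner_R_jacobi_symm,
    real_inner_comm (F.Dx (F.Dx s) t x)]
  ring

end CovSystem

namespace KCovSystem

variable {V : Type*} [NormedAddCommGroup V] [InnerProductSpace ℝ V] (F : KCovSystem V)
  {s : ℝ → ℝ → V}

def rjj (t x : ℝ) (v : V) : V := F.R t x v (F.J t x v) (F.J t x v)

/-- The derivative of `v ↦ R(v, Jv)Jv` at `v` in the direction `w`. -/
def drjj (t x : ℝ) (v w : V) : V :=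
  F.R t x w (F.J t x v) (F.J t x v) + F.R t x v (F.J t x w) (F.J t x v)
    + F.R t x v (F.J t x v) (F.J t x w)

theorem mem_rjj (hs : s ∈ F.Sec) : (fun t x => F.rjj t x (s t x)) ∈ F.Sec :=
  F.mem_R _ hs _ (F.mem_J _ hs) _ (F.mem_J _ hs)

theorem Dx_rjj (hRx : F.IsParallelCurvatureX) (hs : s ∈ F.Sec) (t x : ℝ) :
    F.Dx (fun t x => F.rjj t x (s t x)) t x = F.drjj t x (s t x) (F.Dx s t x) := by
  unfold rjj drjj
  rw [hRx _ hs _ (F.mem_J _ hs) _ (F.mem_J _ hs), F.J_par_x _ hs]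

theorem Dt_rjj (hRt : F.IsParallelCurvatureT) (hs : s ∈ F.Sec) (t x : ℝ) :
    F.Dt (fun t x => F.rjj t x (s t x)) t x = F.drjj t x (s t x) (F.Dt s t x) := by
  unfold rjj drjj
  rw [hRt _ hs _ (F.mem_J _ hs) _ (F.mem_J _ hs), F.J_par_t _ hs]

theorem inner_J_self (t x : ℝ) (v : V) : ⟪F.J t x v, v⟫ = 0 := by
  linarith [F.J_skew t x v v, real_inner_comm v (F.J t x v)]

section Kahler

variable {F} (hRJ : ∀ t x a b c d, ⟪F.R t x a b c, F.J t x d⟫ = -⟪F.R t x a b (F.J t x c), d⟫)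
include hRJ

theorem inner_R_J_J (t x : ℝ) (a b c d : V) :
    ⟪F.R t x (F.J t x a) (F.J t x b) c, d⟫ = ⟪F.R t x a b c, d⟫ := by
  rw [F.R_pair, hRJ, F.R_skew, neg_neg, F.J_sq, inner_neg_right, ← F.R_skew, F.R_pair]

theorem inner_drjj_self (t x : ℝ) (y v : V) :
    ⟪y, F.drjj t x y v⟫ = 3 * ⟪F.rjj t x y, v⟫ := by
  have h₁ : ⟪y, F.R t x v (F.J t x y) (F.J t x y)⟫ = ⟪F.rjj t x y, v⟫ := by
    rw [real_inner_comm, F.R_pair, F.R_antisym, inner_neg_left, F.R_skew, neg_neg, rjj]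
  have h₂ : ⟪y, F.R t x y (F.J t x v) (F.J t x y)⟫ = ⟪F.rjj t x y, v⟫ := by
    rw [real_inner_comm, F.R_pair, hRJ, F.R_antisym, inner_neg_left, neg_neg, rjj]
  have h₃ : ⟪y, F.R t x y (F.J t x y) (F.J t x v)⟫ = ⟪F.rjj t x y, v⟫ := by
    rw [real_inner_comm, F.R_skew, hRJ, neg_neg, rjj]
  rw [drjj, inner_add_right, inner_add_right, h₁, h₂, h₃]
  ring

theorem inner_J_drjj (t x : ℝ) (y w : V) :
    ⟪F.J t x w, F.drjj t x y w⟫ = 2 * ⟪F.R t x y w y, F.J t x w⟫ := by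
  have h₁ : ⟪F.J t x w, F.R t x w (F.J t x y) (F.J t x y)⟫ = ⟪F.R t x y w y, F.J t x w⟫ := by
    rw [real_inner_comm, F.R_pair, inner_R_J_J hRJ, hRJ, F.R_skew, neg_neg]
  have h₂ : ⟪F.J t x w, F.R t x y (F.J t x w) (F.J t x y)⟫ = ⟪F.R t x y w y, F.J t x w⟫ := by
    rw [real_inner_comm, F.R_pair, inner_R_J_J hRJ]
  have h₃ : ⟪F.J t x w, F.R t x y (F.J t x y) (F.J t x w)⟫ = 0 := by
    rw [real_inner_comm, F.inner_R_self]
  rw [drjj, inner_add_right, inner_add_right, h₁, h₂, h₃]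
  ring

end Kahler

noncomputable def energy3 (t : ℝ) : ℝ :=
  (∫ x in (0 : ℝ)..(2 * π), ⟪F.Dx F.ux t x, F.Dx F.ux t x⟫)
    - (1 / 4 : ℝ) * ∫ x in (0 : ℝ)..(2 * π), ⟪F.ux t x, F.rjj t x (F.ux t x)⟫

noncomputable def energy3Rate (t x : ℝ) : ℝ :=
  (⟪F.Dt (F.Dx F.ux) t x, F.Dx F.ux t x⟫ + ⟪F.Dx F.ux t x, F.Dt (F.Dx F.ux) t x⟫)
    - (1 / 4 : ℝ) * (⟪F.Dt F.ux t x, F.rjj t x (F.ux t x)⟫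
      + ⟪F.ux t x, F.Dt (fun t x => F.rjj t x (F.ux t x)) t x⟫)

/-- The `L²`-gradient of `E₃`: its first variation is `∫ ⟨δu, gradEnergy3⟩ dx`. -/
def gradEnergy3 (t x : ℝ) : V :=
  (2 : ℝ) • F.Dx (F.Dx (F.Dx F.ux)) t x - (2 : ℝ) • F.R t x (F.ux t x) (F.Dx F.ux t x) (F.ux t x)
    + F.drjj t x (F.ux t x) (F.Dx F.ux t x)

def variationFlux (t y : ℝ) : ℝ :=
  2 * ⟪F.Dx F.ut t y, F.Dx F.ux t y⟫ - 2 * ⟪F.ut t y, F.Dx (F.Dx F.ux) t y⟫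
    - ⟪F.ut t y, F.rjj t y (F.ux t y)⟫

def schrodingerFlux (t y : ℝ) : ℝ := 2 * ⟪F.J t y (F.Dx F.ux t y), F.Dx (F.Dx F.ux) t y⟫

noncomputable def airyFlux (t y : ℝ) : ℝ :=
  ⟪F.Dx (F.Dx F.ux) t y, F.Dx (F.Dx F.ux) t y⟫
    - ⟪F.Dx F.ux t y, F.R t y (F.ux t y) (F.Dx F.ux t y) (F.ux t y)⟫
    + ⟪F.rjj t y (F.ux t y), F.Dx (F.Dx F.ux) t y⟫
    + (1 / 4 : ℝ) * ⟪F.rjj t y (F.ux t y), F.rjj t y (F.ux t y)⟫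

theorem periodic_variationFlux (t : ℝ) : Function.Periodic (F.variationFlux t) (2 * π) :=
  have hX := F.mem_ux
  have hU := F.mem_ut
  (((F.periodic_inner (F.mem_Dx _ hU) (F.mem_Dx _ hX) t).smul (2 : ℝ)).sub
    ((F.periodic_inner hU (F.mem_Dx _ (F.mem_Dx _ hX)) t).smul (2 : ℝ))).sub
    (F.periodic_inner hU (F.mem_rjj hX) t)

theorem periodic_schrodingerFlux (t : ℝ) : Function.Periodic (F.schrodingerFlux t) (2 * π) :=
  have hW := F.mem_Dx _ F.mem_ux
  (F.periodic_inner (F.mem_J _ hW) (F.mem_Dx _ hW) t).smul (2 : ℝ)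

theorem periodic_airyFlux (t : ℝ) : Function.Periodic (F.airyFlux t) (2 * π) :=
  have hX := F.mem_ux
  have hW := F.mem_Dx _ hX
  have hW' := F.mem_Dx _ hW
  have hS := F.mem_rjj hX
  (((F.periodic_inner hW' hW' t).sub (F.periodic_inner hW (F.mem_R _ hX _ hW _ hX) t)).add
    (F.periodic_inner hS hW' t)).add ((F.periodic_inner hS hS t).smul (1 / 4 : ℝ))

theorem continuous_energy3Rate (t : ℝ) : Continuous (F.energy3Rate t) :=
  have hW := F.mem_Dx _ F.mem_ux
  (F.continuous_Dt_inner hW hW t).sub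
    (continuous_const.mul (F.continuous_Dt_inner F.mem_ux (F.mem_rjj F.mem_ux) t))

theorem hasDerivAt_energy3 (t : ℝ) :
    HasDerivAt F.energy3 (∫ x in (0 : ℝ)..(2 * π), F.energy3Rate t x) t := by
  have hX := F.mem_ux
  have hW := F.mem_Dx _ hX
  have hS := F.mem_rjj hX
  refine ((F.dint _ hW _ hW t).sub ((F.dint _ hX _ hS t).const_mul (1 / 4))).congr_deriv ?_
  unfold energy3Rate
  rw [intervalIntegral.integral_sub ((F.continuous_Dt_inner hW hW t).intervalIntegrable _ _)
      (((F.continuous_Dt_inner hX hS t).intervalIntegrable _ _).const_mul _),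
    intervalIntegral.integral_const_mul]

section Flow

variable {F} (hRx : F.IsParallelCurvatureX) (hRt : F.IsParallelCurvatureT)
  (hRJ : ∀ t x a b c d, ⟪F.R t x a b c, F.J t x d⟫ = -⟪F.R t x a b (F.J t x c), d⟫)
  (hcurv : ∀ t x (X Y : V), ⟪F.R t x Y X X, F.R t x X (F.J t x X) (F.J t x X)⟫ = 0)

include hRt hRJ in
theorem energy3Rate_eq (t x : ℝ) :
    F.energy3Rate t x = 2 * ⟪F.Dx (F.Dx F.ut) t x, F.Dx F.ux t x⟫
      - 2 * ⟪F.R t x (F.ux t x) (F.Dx F.ux t x) (F.ux t x), F.ut t x⟫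
      - ⟪F.Dx F.ut t x, F.rjj t x (F.ux t x)⟫ := by
  have hDtX : F.Dt F.ux t x = F.Dx F.ut t x := by rw [F.torsion]
  have hDtW : F.Dt (F.Dx F.ux) t x
      = F.Dx (F.Dx F.ut) t x + F.R t x (F.ut t x) (F.ux t x) (F.ux t x) := by
    rw [← F.comm _ F.mem_ux, F.torsion]
    abel
  have hRUXX : ⟪F.R t x (F.ut t x) (F.ux t x) (F.ux t x), F.Dx F.ux t x⟫
      = -⟪F.R t x (F.ux t x) (F.Dx F.ux t x) (F.ux t x), F.ut t x⟫ := by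
    rw [F.R_antisym, inner_neg_left, F.inner_R_jacobi_symm]
  rw [energy3Rate, F.Dt_rjj hRt F.mem_ux, inner_drjj_self hRJ, hDtX,
    real_inner_comm (F.Dt (F.Dx F.ux) t x), hDtW, inner_add_left, hRUXX,
    real_inner_comm (F.Dx F.ut t x)]
  ring

include hRx hRt hRJ in
theorem hasDerivAt_variationFlux (t x : ℝ) :
    HasDerivAt (F.variationFlux t) (F.energy3Rate t x - ⟪F.ut t x, F.gradEnergy3 t x⟫) x := by
  have hX := F.mem_ux
  have hW := F.mem_Dx _ hX
  have hU := F.mem_ut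
  have h₁ := F.metric_x _ (F.mem_Dx _ hU) _ hW t x
  have h₂ := F.metric_x _ hU _ (F.mem_Dx _ hW) t x
  have h₃ := F.metric_x _ hU _ (F.mem_rjj hX) t x
  refine (((h₁.const_mul 2).sub (h₂.const_mul 2)).sub h₃).congr_deriv ?_
  rw [F.Dx_rjj hRx hX, energy3Rate_eq hRt hRJ, gradEnergy3, inner_add_right, inner_sub_right,
    real_inner_smul_right, real_inner_smul_right,
    real_inner_comm (F.ut t x) (F.R t x (F.ux t x) (F.Dx F.ux t x) (F.ux t x))]
  ring

include hRJ in
theorem hasDerivAt_schrodingerFlux (t x : ℝ) :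
    HasDerivAt (F.schrodingerFlux t) ⟪F.J t x (F.Dx F.ux t x), F.gradEnergy3 t x⟫ x := by
  have hW := F.mem_Dx _ F.mem_ux
  refine ((F.metric_x _ (F.mem_J _ hW) _ (F.mem_Dx _ hW) t x).const_mul 2).congr_deriv ?_
  rw [F.J_par_x _ hW, F.inner_J_self, gradEnergy3, inner_add_right, inner_sub_right,
    real_inner_smul_right, real_inner_smul_right, inner_J_drjj hRJ,
    real_inner_comm (F.J t x (F.Dx F.ux t x))]
  ring

include hRx hcurv in
theorem hasDerivAt_airyFlux (t x : ℝ) :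
    HasDerivAt (F.airyFlux t)
      ⟪F.Dx (F.Dx F.ux) t x + (1 / 2 : ℝ) • F.rjj t x (F.ux t x), F.gradEnergy3 t x⟫ x := by
  have hX := F.mem_ux
  have hW := F.mem_Dx _ hX
  have hW' := F.mem_Dx _ hW
  have hS := F.mem_rjj hX
  have hSR : ⟪F.rjj t x (F.ux t x), F.R t x (F.ux t x) (F.Dx F.ux t x) (F.ux t x)⟫ = 0 := by
    rw [real_inner_comm, F.R_antisym, inner_neg_left, neg_eq_zero]
    exact hcurv t x _ _
  refine ((((F.metric_x _ hW' _ hW' t x).sub (F.hasDerivAt_inner_Dx_R_Dx hRx hX t x)).add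
    (F.metric_x _ hS _ hW' t x)).add ((F.metric_x _ hS _ hS t x).const_mul (1 / 4))).congr_deriv ?_
  rw [F.Dx_rjj hRx hX, gradEnergy3]
  simp only [inner_add_left, inner_add_right, inner_sub_right, real_inner_smul_left,
    real_inner_smul_right, hSR]
  rw [real_inner_comm (F.Dx (F.Dx F.ux) t x) (F.Dx (F.Dx (F.Dx F.ux)) t x),
    real_inner_comm (F.Dx (F.Dx F.ux) t x) (F.drjj t x (F.ux t x) (F.Dx F.ux t x)),
    real_inner_comm (F.rjj t x (F.ux t x)) (F.drjj t x (F.ux t x) (F.Dx F.ux t x))]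
  ring

include hRx hRt hRJ hcurv in
theorem integral_energy3Rate_eq_zero {α β : ℝ}
    (hflow : ∀ t x, F.ut t x = α • F.J t x (F.Dx F.ux t x)
      + β • (F.Dx (F.Dx F.ux) t x + (1 / 2 : ℝ) • F.rjj t x (F.ux t x))) (t : ℝ) :
    ∫ x in (0 : ℝ)..(2 * π), F.energy3Rate t x = 0 := by
  have hflux : ∀ x, HasDerivAt
      (F.variationFlux t + (α • F.schrodingerFlux t + β • F.airyFlux t)) (F.energy3Rate t x) x :=
    fun x => ((F.hasDerivAt_variationFlux hRx hRt hRJ t x).add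
      (((F.hasDerivAt_schrodingerFlux hRJ t x).const_mul α).add
        ((F.hasDerivAt_airyFlux hRx hcurv t x).const_mul β))).congr_deriv (by
      rw [hflow t x, inner_add_left, real_inner_smul_left, real_inner_smul_left]
      ring)
  exact intervalIntegral_eq_zero_of_hasDerivAt_of_periodic
    ((F.periodic_variationFlux t).add
      (((F.periodic_schrodingerFlux t).smul α).add ((F.periodic_airyFlux t).smul β)))
    hflux ((F.continuous_energy3Rate t).intervalIntegrable _ _)

end Flow

end KCovSystem

/-- If the Kähler manifold `N` is locally symmetric (`∇R = 0`) and satisfies the curvature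
identity `⟨R(Y,X)X, R(X,JX)JX⟩ ≡ 0`, then along any smooth solution of the Schrödinger–Airy
flow from `S¹`, the functional
`E₃(u) = ∫ |∇ₓuₓ|² dx − (1/4) ∫ ⟨uₓ, R(uₓ, Juₓ)Juₓ⟩ dx` is conserved. -/
theorem stmt14 {V : Type*} [NormedAddCommGroup V] [InnerProductSpace ℝ V]
    (F : KCovSystem V) (α β : ℝ)
    (hRx : ∀ a ∈ F.Sec, ∀ b ∈ F.Sec, ∀ c ∈ F.Sec, ∀ t x,
      F.Dx (fun t x => F.R t x (a t x) (b t x) (c t x)) t x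
        = F.R t x (F.Dx a t x) (b t x) (c t x) + F.R t x (a t x) (F.Dx b t x) (c t x)
          + F.R t x (a t x) (b t x) (F.Dx c t x))
    (hRt : ∀ a ∈ F.Sec, ∀ b ∈ F.Sec, ∀ c ∈ F.Sec, ∀ t x,
      F.Dt (fun t x => F.R t x (a t x) (b t x) (c t x)) t x
        = F.R t x (F.Dt a t x) (b t x) (c t x) + F.R t x (a t x) (F.Dt b t x) (c t x)
          + F.R t x (a t x) (b t x) (F.Dt c t x))
    (hRJ : ∀ t x a b c d, ⟪F.R t x a b c, F.J t x d⟫ = -⟪F.R t x a b (F.J t x c), d⟫)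
    (hcurv : ∀ t x (X Y : V),
      ⟪F.R t x Y X X, F.R t x X (F.J t x X) (F.J t x X)⟫ = 0)
    (hflow : ∀ t x, F.ut t x
      = α • F.J t x (F.Dx F.ux t x)
        + β • (F.Dx (F.Dx F.ux) t x
          + (1 / 2 : ℝ) • F.R t x (F.ux t x) (F.J t x (F.ux t x)) (F.J t x (F.ux t x)))) :
    ∀ t₁ t₂ : ℝ,
      ((∫ x in (0 : ℝ)..(2 * π), ⟪F.Dx F.ux t₁ x, F.Dx F.ux t₁ x⟫)
          - (1 / 4 : ℝ) * ∫ x in (0 : ℝ)..(2 * π),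
              ⟪F.ux t₁ x, F.R t₁ x (F.ux t₁ x) (F.J t₁ x (F.ux t₁ x)) (F.J t₁ x (F.ux t₁ x))⟫)
        = ((∫ x in (0 : ℝ)..(2 * π), ⟪F.Dx F.ux t₂ x, F.Dx F.ux t₂ x⟫)
          - (1 / 4 : ℝ) * ∫ x in (0 : ℝ)..(2 * π),
              ⟪F.ux t₂ x, F.R t₂ x (F.ux t₂ x) (F.J t₂ x (F.ux t₂ x)) (F.J t₂ x (F.ux t₂ x))⟫) := by
  intro t₁ t₂
  have hderiv (t : ℝ) : HasDerivAt F.energy3 0 t := by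
    simpa only [F.integral_energy3Rate_eq_zero hRx hRt hRJ hcurv hflow t] using
      F.hasDerivAt_energy3 t
  exact is_const_of_deriv_eq_zero (fun t => (hderiv t).differentiableAt)
    (fun t => (hderiv t).deriv) t₁ t₂
end

section
/- Let u : S¹ × (0,T) → N be smooth into a Riemannian manifold, with ∇ the pullback connection. Then d/dt ∫_{S¹} |∇_x u_x|² dx = 2∫ ⟨∇_x³ u_x, u_t⟩ dx + 2∫ ⟨u_t, R(∇_x u_x, u_x) u_x⟩ dx. -/
/-!
Differentiating under the integral and using the commutation formula with `∇ₜuₓ = ∇ₓuₜ`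
gives `∇ₜ∇ₓuₓ = ∇ₓ²uₜ + R(uₜ,uₓ)uₓ`. Two integrations by parts on the circle move both
`x`-derivatives from `uₜ` onto `∇ₓuₓ`, and the pair symmetry of `R` turns
`⟨R(uₜ,uₓ)uₓ, ∇ₓuₓ⟩` into `⟨uₜ, R(∇ₓuₓ,uₓ)uₓ⟩`.
-/

open scoped RealInnerProductSpace
open Real

namespace CovSystem

variable {V : Type*} [NormedAddCommGroup V] [InnerProductSpace ℝ V] (F : CovSystem V)

lemma continuous_apply {s : ℝ → ℝ → V} (hs : s ∈ F.Sec) (t : ℝ) :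
    Continuous (s t) :=
  (F.cont s hs).comp (Continuous.prodMk_right t)

lemma intervalIntegrable_inner {s r : ℝ → ℝ → V} (hs : s ∈ F.Sec) (hr : r ∈ F.Sec)
    (t : ℝ) : IntervalIntegrable (fun x => ⟪s t x, r t x⟫) MeasureTheory.volume 0 (2 * π) :=
  ((F.continuous_apply hs t).inner (F.continuous_apply hr t)).intervalIntegrable _ _

theorem integral_inner_Dx_left {s r : ℝ → ℝ → V} (hs : s ∈ F.Sec) (hr : r ∈ F.Sec)
    (t : ℝ) :
    ∫ x in (0 : ℝ)..(2 * π), ⟪F.Dx s t x, r t x⟫ =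
      -∫ x in (0 : ℝ)..(2 * π), ⟪s t x, F.Dx r t x⟫ := by
  have hDs := F.mem_Dx s hs
  have hDr := F.mem_Dx r hr
  have hsum : ∫ x in (0 : ℝ)..(2 * π), (⟪F.Dx s t x, r t x⟫ + ⟪s t x, F.Dx r t x⟫) = 0 := by
    rw [intervalIntegral.integral_eq_sub_of_hasDerivAt (fun x _ => F.metric_x s hs r hr t x)
      ((F.intervalIntegrable_inner hDs hr t).add (F.intervalIntegrable_inner hs hDr t))]
    simpa only [zero_add, sub_self] using
      congrArg₂ (fun a b => ⟪a, b⟫ - ⟪s t 0, r t 0⟫) (F.periodic s hs t 0) (F.periodic r hr t 0)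
  rw [intervalIntegral.integral_add (F.intervalIntegrable_inner hDs hr t)
    (F.intervalIntegrable_inner hs hDr t)] at hsum
  linarith

theorem integral_inner_Dx_Dx_left {s r : ℝ → ℝ → V} (hs : s ∈ F.Sec) (hr : r ∈ F.Sec)
    (t : ℝ) :
    ∫ x in (0 : ℝ)..(2 * π), ⟪F.Dx (F.Dx s) t x, r t x⟫ =
      ∫ x in (0 : ℝ)..(2 * π), ⟪s t x, F.Dx (F.Dx r) t x⟫ := by
  rw [F.integral_inner_Dx_left (F.mem_Dx s hs) hr, F.integral_inner_Dx_left hs (F.mem_Dx r hr),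
    neg_neg]

theorem hasDerivAt_integral_inner_self {s : ℝ → ℝ → V} (hs : s ∈ F.Sec) (t : ℝ) :
    HasDerivAt (fun τ => ∫ x in (0 : ℝ)..(2 * π), ⟪s τ x, s τ x⟫)
      (2 * ∫ x in (0 : ℝ)..(2 * π), ⟪F.Dt s t x, s t x⟫) t := by
  convert F.dint s hs s hs t using 1
  rw [← intervalIntegral.integral_const_mul]
  congr 1 with x
  rw [real_inner_comm (s t x), two_mul]

theorem Dt_Dx_ux (t x : ℝ) :
    F.Dt (F.Dx F.ux) t x = F.Dx (F.Dx F.ut) t x + F.R t x (F.ut t x) (F.ux t x) (F.ux t x) := by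
  rw [← F.comm F.ux F.mem_ux, F.torsion, add_sub_cancel]

theorem inner_R_eq_inner_R_rev (t x : ℝ) (a b c d : V) :
    ⟪F.R t x a b c, d⟫ = ⟪a, F.R t x d c b⟫ := by
  rw [F.R_pair, F.R_antisym t x c, inner_neg_left, F.R_skew, neg_neg, real_inner_comm]

end CovSystem

/-- For a smooth map `u : S¹ × (0,T) → N` into a Riemannian manifold,
`d/dt ∫ |∇ₓuₓ|² dx = 2∫⟨∇ₓ³uₓ, uₜ⟩ dx + 2∫⟨uₜ, R(∇ₓuₓ, uₓ)uₓ⟩ dx`. -/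
theorem stmt16 {V : Type*} [NormedAddCommGroup V] [InnerProductSpace ℝ V]
    (F : CovSystem V) :
    ∀ t : ℝ,
      HasDerivAt (fun τ => ∫ x in (0 : ℝ)..(2 * π), ⟪F.Dx F.ux τ x, F.Dx F.ux τ x⟫)
        (2 * (∫ x in (0 : ℝ)..(2 * π), ⟪F.Dx (F.Dx (F.Dx F.ux)) t x, F.ut t x⟫)
          + 2 * ∫ x in (0 : ℝ)..(2 * π),
              ⟪F.ut t x, F.R t x (F.Dx F.ux t x) (F.ux t x) (F.ux t x)⟫) t := by
  intro t
  have hA : F.Dx F.ux ∈ F.Sec := F.mem_Dx _ F.mem_ux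
  convert F.hasDerivAt_integral_inner_self hA t using 1
  have hsplit : ∫ x in (0 : ℝ)..(2 * π), ⟪F.Dt (F.Dx F.ux) t x, F.Dx F.ux t x⟫ =
      (∫ x in (0 : ℝ)..(2 * π), ⟪F.Dx (F.Dx F.ut) t x, F.Dx F.ux t x⟫) +
        ∫ x in (0 : ℝ)..(2 * π), ⟪F.ut t x, F.R t x (F.Dx F.ux t x) (F.ux t x) (F.ux t x)⟫ := by
    simp only [F.Dt_Dx_ux, inner_add_left, F.inner_R_eq_inner_R_rev]
    exact intervalIntegral.integral_add
      (F.intervalIntegrable_inner (F.mem_Dx _ (F.mem_Dx _ F.mem_ut)) hA t)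
      (F.intervalIntegrable_inner F.mem_ut (F.mem_R _ hA _ F.mem_ux _ F.mem_ux) t)
  rw [hsplit, F.integral_inner_Dx_Dx_left F.mem_ut hA]
  simp only [real_inner_comm (F.ut t _)]
  ring
end
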